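/- Let 0 < α ≤ 1, τ > 0, μ ≠ 0, β±, β as above, σ±(τ) = e^{iβ±τ/2} sinc(β±τ/2). Define q⁺ = (−ε²τ/(αβ))·(1−σ⁺(τ))/(β⁺ e^{iβ⁺τ}) and q⁻ = (−ε²τ/(αβ))·(1−σ⁻(τ))/(β⁻ e^{iβ⁻τ}). Then |q⁺| ≤ C ε² τ² and |q⁻| ≤ C ε² τ² for a constant C independent of μ, τ, ε. -/

import Mathlib

/-!
Writing `s = β τ / 2`, the factor `1 - σ(τ)` is `1 - e^{is} sinc s`, which is `O(|s|)`: near `0`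
because `|s - sin s| ≤ |s|³ / 6`, and away from `0` because `e^{is}` and `sinc s` are bounded.
Dividing by `β` leaves `O(τ)`, and the prefactor `ε² τ / (α β)` is at most `ε² τ` since
`α β = √(1 + 4αμ²) ≥ 1`. Hence `|q±| ≤ ε² τ²`.
-/

noncomputable def betaP (α μ : ℝ) : ℝ := (1 + Real.sqrt (1 + 4 * α * μ ^ 2)) / (2 * α)
noncomputable def betaM (α μ : ℝ) : ℝ := (1 - Real.sqrt (1 + 4 * α * μ ^ 2)) / (2 * α)
noncomputable def betaD (α μ : ℝ) : ℝ := Real.sqrt (1 + 4 * α * μ ^ 2) / α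
noncomputable def sinc (s : ℝ) : ℝ := if s = 0 then 1 else Real.sin s / s
noncomputable def sigP (α μ τ : ℝ) : ℂ :=
  Complex.exp (Complex.I * (betaP α μ) * τ / 2) * (sinc (betaP α μ * τ / 2) : ℂ)
noncomputable def sigM (α μ τ : ℝ) : ℂ :=
  Complex.exp (Complex.I * (betaM α μ) * τ / 2) * (sinc (betaM α μ * τ / 2) : ℂ)

open Complex

lemma sinc_eq_real_sinc : sinc = Real.sinc := rfl

lemma abs_one_sub_sinc_le (s : ℝ) : |1 - Real.sinc s| ≤ |s| := by
  rcases eq_or_ne s 0 with rfl | hs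
  · simp
  have hs' : 0 < |s| := abs_pos.mpr hs
  rcases le_total |s| 2 with hsmall | hlarge
  · have hcubic : |1 - Real.sinc s| ≤ |s| ^ 2 / 6 := by
      rw [Real.sinc_of_ne_zero hs, one_sub_div hs, abs_div, div_le_iff₀ hs']
      calc |s - Real.sin s| ≤ |s| ^ 3 / 6 := Real.abs_sub_sin_le s
        _ = |s| ^ 2 / 6 * |s| := by ring
    nlinarith
  · calc |1 - Real.sinc s| ≤ |1| + |Real.sinc s| := abs_sub _ _
      _ ≤ 1 + 1 := by gcongr <;> simp [Real.abs_sinc_le_one]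
      _ ≤ |s| := by linarith

lemma norm_one_sub_exp_mul_sinc_le (s : ℝ) : ‖1 - exp (I * s) * (sinc s : ℂ)‖ ≤ 2 * |s| := by
  have hsplit : 1 - exp (I * s) * (sinc s : ℂ)
      = exp (I * s) * ((1 - sinc s : ℝ) : ℂ) - (exp (I * s) - 1) := by
    push_cast; ring
  rw [hsplit]
  calc _ ≤ ‖exp (I * s)‖ * |1 - sinc s| + ‖exp (I * s) - 1‖ := by
        rw [← Real.norm_eq_abs, ← norm_real, ← norm_mul]
        exact norm_sub_le _ _
    _ ≤ 1 * |s| + |s| := by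
        rw [norm_exp_I_mul_ofReal, sinc_eq_real_sinc]
        gcongr 1 * ?_ + ?_
        · exact abs_one_sub_sinc_le s
        · exact Real.norm_eq_abs s ▸ Real.norm_exp_I_mul_ofReal_sub_one_le
    _ = 2 * |s| := by ring

lemma norm_one_sub_exp_mul_sinc_div_le (b τ : ℝ) (hb : b ≠ 0) :
    ‖(1 - exp (I * b * τ / 2) * (sinc (b * τ / 2) : ℂ)) / ((b : ℂ) * exp (I * b * τ))‖ ≤ |τ| := by
  have hhalf : I * b * τ / 2 = I * ((b * τ / 2 : ℝ) : ℂ) := by push_cast; ring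
  have hfull : I * b * τ = I * ((b * τ : ℝ) : ℂ) := by push_cast; ring
  rw [hhalf, hfull, norm_div, norm_mul, norm_exp_I_mul_ofReal, mul_one, norm_real,
    Real.norm_eq_abs, div_le_iff₀ (abs_pos.mpr hb)]
  calc _ ≤ 2 * |b * τ / 2| := norm_one_sub_exp_mul_sinc_le _
    _ = |τ| * |b| := by rw [abs_div, abs_mul, abs_two]; ring

/-- The paper's `q±`, with `b = β±` and `d = β`. -/
lemma norm_q_le (α d ε b τ : ℝ) (hd : 1 ≤ |α * d|) (hb : b ≠ 0) :
    ‖-(ε : ℂ) ^ 2 * τ / ((α : ℂ) * d)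
        * ((1 - exp (I * b * τ / 2) * (sinc (b * τ / 2) : ℂ)) / ((b : ℂ) * exp (I * b * τ)))‖
      ≤ ε ^ 2 * τ ^ 2 := by
  have hprefactor : ‖-(ε : ℂ) ^ 2 * τ / ((α : ℂ) * d)‖ ≤ ε ^ 2 * |τ| := by
    rw [← ofReal_mul, norm_div, norm_real, Real.norm_eq_abs]
    refine div_le_of_le_mul₀ (abs_nonneg _) (by positivity) ?_
    calc ‖-(ε : ℂ) ^ 2 * τ‖ = ε ^ 2 * |τ| * 1 := by simp
      _ ≤ ε ^ 2 * |τ| * |α * d| := by gcongr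
  calc _ ≤ ε ^ 2 * |τ| * |τ| := by
        rw [norm_mul]
        gcongr
        exact norm_one_sub_exp_mul_sinc_div_le b τ hb
    _ = ε ^ 2 * τ ^ 2 := by rw [mul_assoc, abs_mul_abs_self]; ring

lemma one_le_sqrt_one_add {α : ℝ} (μ : ℝ) (hα : 0 ≤ α) : 1 ≤ Real.sqrt (1 + 4 * α * μ ^ 2) :=
  Real.one_le_sqrt.mpr (le_add_of_nonneg_right (by positivity))

lemma one_le_mul_betaD {α : ℝ} (μ : ℝ) (hα : 0 < α) : 1 ≤ α * betaD α μ := by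
  rw [betaD, mul_div_cancel₀ _ hα.ne']
  exact one_le_sqrt_one_add μ hα.le

lemma betaP_pos {α : ℝ} (μ : ℝ) (hα : 0 < α) : 0 < betaP α μ := by
  have := one_le_sqrt_one_add μ hα.le
  unfold betaP
  positivity

lemma betaM_neg {α μ : ℝ} (hα : 0 < α) (hμ : μ ≠ 0) : betaM α μ < 0 := by
  have hsqrt : 1 < Real.sqrt (1 + 4 * α * μ ^ 2) :=
    Real.lt_sqrt_of_sq_lt (by nlinarith [pow_pos (abs_pos.mpr hμ) 2, sq_abs μ])
  exact div_neg_of_neg_of_pos (by linarith) (by linarith)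

/-- Bounds |q±| ≤ C ε² τ², C independent of μ, τ, ε. -/
theorem stmt10 :
    ∃ C : ℝ, 0 < C ∧ ∀ α μ τ ε : ℝ, 0 < α → α ≤ 1 → 0 < τ → μ ≠ 0 →
      0 < ε → ε ≤ 1 →
      ‖-(ε : ℂ) ^ 2 * τ / ((α : ℂ) * (betaD α μ))
          * ((1 - sigP α μ τ)
              / ((betaP α μ : ℂ) * Complex.exp (Complex.I * (betaP α μ) * τ)))‖
        ≤ C * ε ^ 2 * τ ^ 2 ∧
      ‖-(ε : ℂ) ^ 2 * τ / ((α : ℂ) * (betaD α μ))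
          * ((1 - sigM α μ τ)
              / ((betaM α μ : ℂ) * Complex.exp (Complex.I * (betaM α μ) * τ)))‖
        ≤ C * ε ^ 2 * τ ^ 2 := by
  refine ⟨1, one_pos, fun α μ τ ε hα _ _ hμ _ _ => ?_⟩
  have hd : 1 ≤ |α * betaD α μ| := (one_le_mul_betaD μ hα).trans (le_abs_self _)
  rw [one_mul]
  exact ⟨norm_q_le α _ ε _ τ hd (betaP_pos μ hα).ne', norm_q_le α _ ε _ τ hd (betaM_neg hα hμ).ne⟩
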